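/- Let 1 < q < ∞, let 1 ≤ p ≤ q, let q' = q/(q−1), and let c be defined by 1/c = 1/p + 1/q'. Let ρ be a bipartite distribution on U × V that is q-to-p hypercontractive. Then for every integer n ≥ 1, col_ρ(n, 1/n) ≥ ((p^{1/p} · q'^{1/q'})^c / (2c)) · n^{1−c}. -/

import Mathlib

open scoped BigOperators ENNReal

namespace SR

variable {U V X Y : Type*}

/-- `μ` is a probability distribution on a finite type. -/
def IsDist {α : Type*} [Fintype α] (μ : α → ℝ) : Prop :=
  (∀ a, 0 ≤ μ a) ∧ ∑ a, μ a = 1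

/-- Expectation of `f` under `μ`. -/
def expect {α : Type*} [Fintype α] (μ : α → ℝ) (f : α → ℝ) : ℝ :=
  ∑ a, μ a * f a

/-- First (`U`-)marginal of a bipartite distribution. -/
def margFst [Fintype V] (ρ : U × V → ℝ) : U → ℝ :=
  fun u => ∑ v, ρ (u, v)

/-- Second (`V`-)marginal of a bipartite distribution. -/
def margSnd [Fintype U] (ρ : U × V → ℝ) : V → ℝ :=
  fun v => ∑ u, ρ (u, v)

/-- Maximum correlation of a bipartite distribution (sSup of the empty set is 0). -/
noncomputable def cor [Fintype U] [Fintype V] (ρ : U × V → ℝ) : ℝ :=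
  sSup { t : ℝ | ∃ (f : U → ℝ) (g : V → ℝ),
      expect (margFst ρ) f = 0 ∧ expect (margSnd ρ) g = 0 ∧
      expect (margFst ρ) (fun u => f u ^ 2) = 1 ∧
      expect (margSnd ρ) (fun v => g v ^ 2) = 1 ∧
      t = ∑ x : U × V, ρ x * (f x.1 * g x.2) }

/-- Tensor product of two bipartite distributions. -/
def tensor (ρ : U × V → ℝ) (σ : X × Y → ℝ) : (U × X) × (V × Y) → ℝ :=
  fun p => ρ (p.1.1, p.2.1) * σ (p.1.2, p.2.2)

/-- Tensor product of a family of bipartite distributions. -/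
def tensorPi {n : ℕ} {U V : Fin n → Type*} (ρ : ∀ i, U i × V i → ℝ) :
    (∀ i, U i) × (∀ i, V i) → ℝ :=
  fun p => ∏ i, ρ i (p.1 i, p.2 i)

/-- The distribution of `ℓ` i.i.d. samples from a bipartite distribution `ρ`. -/
def iid (ρ : U × V → ℝ) (ℓ : ℕ) : (Fin ℓ → U) × (Fin ℓ → V) → ℝ :=
  fun p => ∏ i, ρ (p.1 i, p.2 i)

/-- Agreement complexity of `ρ` at success probability `p`. -/
noncomputable def agr [Fintype U] [Fintype V] (ρ : U × V → ℝ) (p : ℝ) : ℝ :=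
  sInf { c : ℝ | ∃ (ℓ : ℕ) (f : (Fin ℓ → U) → ℝ) (g : (Fin ℓ → V) → ℝ),
      (∀ x, f x ∈ Set.Icc (0:ℝ) 1) ∧ (∀ y, g y ∈ Set.Icc (0:ℝ) 1) ∧
      p ≤ (∑ x : (Fin ℓ → U) × (Fin ℓ → V), iid ρ ℓ x * (f x.1 * g x.2)) ∧
      c = (∑ x : (Fin ℓ → U) × (Fin ℓ → V), iid ρ ℓ x * f x.1)
        + (∑ x : (Fin ℓ → U) × (Fin ℓ → V), iid ρ ℓ x * g x.2) }

/-- There is a `p`-collision protocol for `ρ` with domain size `n` and output size at most `k`.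
    The players may use private randomness (uniform over `Fin sA`, `Fin sB` weighted by
    distributions `μA`, `μB`, independent of everything else). -/
def ColLE [Fintype U] [Fintype V] (ρ : U × V → ℝ) (n : ℕ) (p : ℝ) (k : ℕ) : Prop :=
  ∃ (ℓ sA sB : ℕ) (μA : Fin sA → ℝ) (μB : Fin sB → ℝ)
    (A : (Fin ℓ → U) → Fin sA → Finset (Fin n))
    (B : (Fin ℓ → V) → Fin sB → Finset (Fin n)),
    IsDist μA ∧ IsDist μB ∧
    (∀ i : Fin n, p ≤ ∑ x : (Fin ℓ → U) × (Fin ℓ → V), ∑ rA, ∑ rB,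
        iid ρ ℓ x * (μA rA * μB rB) *
          (if i ∈ A x.1 rA ∧ i ∈ B x.2 rB then (1:ℝ) else 0)) ∧
    (∀ (x : (Fin ℓ → U) × (Fin ℓ → V)) (rA : Fin sA),
        0 < iid ρ ℓ x → 0 < μA rA → (A x.1 rA).card ≤ k) ∧
    (∀ (x : (Fin ℓ → U) × (Fin ℓ → V)) (rB : Fin sB),
        0 < iid ρ ℓ x → 0 < μB rB → (B x.2 rB).card ≤ k)

/-- Collision complexity `col_ρ(n, p)`, valued in `ℕ∞` (`sInf ∅ = ⊤`). -/
noncomputable def col [Fintype U] [Fintype V] (ρ : U × V → ℝ) (n : ℕ) (p : ℝ) : ℕ∞ :=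
  sInf { k : ℕ∞ | ∃ m : ℕ, k = (m : ℕ∞) ∧ ColLE ρ n p m }

/-- Base-2 Shannon entropy of a finitely supported distribution. -/
noncomputable def ent2 {α : Type*} [Fintype α] (μ : α → ℝ) : ℝ :=
  ∑ a, -(μ a * Real.logb 2 (μ a))

open Classical in
/-- Probability of an event under `μ`. -/
noncomputable def prEvent {Ω : Type*} [Fintype Ω] (μ : Ω → ℝ) (P : Ω → Prop) : ℝ :=
  ∑ ω, if P ω then μ ω else 0

/-- The distribution of a random variable `Z` conditioned on an event `P`. -/
noncomputable def condDist {Ω α : Type*} [Fintype Ω] (μ : Ω → ℝ) (Z : Ω → α)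
    (P : Ω → Prop) : α → ℝ :=
  fun a => prEvent μ (fun ω => Z ω = a ∧ P ω) / prEvent μ P

/-- The `L^r(μ)`-norm of a complex-valued function on a finite probability space. -/
noncomputable def lnorm {α : Type*} [Fintype α] (μ : α → ℝ) (r : ℝ) (h : α → ℂ) : ℝ :=
  (∑ a, μ a * ‖h a‖ ^ r) ^ (1 / r)

/-- The conditional-expectation operator `T_ρ` of a bipartite distribution. -/
noncomputable def condOp [Fintype U] [Fintype V] (ρ : U × V → ℝ) (f : U → ℂ) : V → ℂ :=
  fun v => ∑ u, ((ρ (u, v) / margSnd ρ v : ℝ) : ℂ) * f u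

/-- `ρ` is `q`-to-`p` hypercontractive. -/
def Hyper [Fintype U] [Fintype V] (ρ : U × V → ℝ) (q p : ℝ) : Prop :=
  ∀ f : U → ℂ, lnorm (margSnd ρ) q (condOp ρ f) ≤ lnorm (margFst ρ) p f

/-- Inner product over 𝔽₂. -/
def ipF2 {m : ℕ} (u v : Fin m → ZMod 2) : ZMod 2 := ∑ i, u i * v i

/-- `σ_{m,b}`: uniform distribution on pairs `(u,v) ∈ 𝔽₂^m × 𝔽₂^m` with `u·v = b`. -/
noncomputable def sigmaIP (m : ℕ) (b : ZMod 2) :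
    ((Fin m → ZMod 2) × (Fin m → ZMod 2)) → ℝ :=
  fun p => if ipF2 p.1 p.2 = b then
      (((Finset.univ.filter
        (fun q : (Fin m → ZMod 2) × (Fin m → ZMod 2) => ipF2 q.1 q.2 = b)).card : ℝ))⁻¹
    else 0

/-- `ρ_disj`: uniform distribution on `{(0,0),(0,1),(1,0)} ⊆ {0,1} × {0,1}`
    (with `false = 0`, `true = 1`). -/
noncomputable def rhoDisj : Bool × Bool → ℝ :=
  fun x => if x = (true, true) then 0 else 1/3


/-!
A collision protocol with output size `m` yields, for each `i ∈ [n]`, the functions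
`F_i(u) = Pr[i ∈ A(u)]` and `G_i(v) = Pr[i ∈ B(v)]` with values in `[0,1]`, whose expectations
`a_i`, `b_i` satisfy `∑ a_i ≤ m`, `∑ b_i ≤ m` and `E[F_i(u) G_i(v)] ≥ 1/n`. Hypercontractivity
tensorizes when `p ≤ q` (by Minkowski's inequality in `L^{q/p}`), so `ρ^⊗ℓ` is still `q`-to-`p`
hypercontractive, and Hölder's inequality gives
`E[F(u) G(v)] = E[(T F) G] ≤ ‖T F‖_q ‖G‖_{q'} ≤ ‖F‖_p ‖G‖_{q'} ≤ (E F)^{1/p} (E G)^{1/q'}`.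
Weighted AM-GM turns `1/n ≤ a_i^{1/p} b_i^{1/q'}` into
`(p^{1/p} q'^{1/q'})^c n^{-c} ≤ c (a_i + b_i)`, and summing over `i` gives the bound.
-/

section WeightedInequalities

variable {ι : Type*} [Fintype ι]

lemma rpow_one_div_mul_rpow {w z r : ℝ} (hw : 0 ≤ w) (hz : 0 ≤ z) (hr : r ≠ 0) :
    (w ^ (1 / r) * z) ^ r = w * z ^ r := by
  rw [Real.mul_rpow (by positivity) hz, one_div, Real.rpow_inv_rpow hw hr]

lemma weighted_inner_le_Lp_mul_Lq {p q : ℝ} (hpq : p.HolderConjugate q) (w f g : ι → ℝ)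
    (hw : ∀ i, 0 ≤ w i) (hf : ∀ i, 0 ≤ f i) (hg : ∀ i, 0 ≤ g i) :
    ∑ i, w i * (f i * g i) ≤
      (∑ i, w i * f i ^ p) ^ (1 / p) * (∑ i, w i * g i ^ q) ^ (1 / q) := by
  have hsplit : ∀ i, w i * (f i * g i) = (w i ^ (1 / p) * f i) * (w i ^ (1 / q) * g i) := by
    intro i
    have hw1 : w i ^ (1 / p) * w i ^ (1 / q) = w i := by
      rw [← Real.rpow_add' (hw i) (by simp [hpq.inv_add_inv_eq_one]), one_div, one_div,
        hpq.inv_add_inv_eq_one, Real.rpow_one]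
    calc w i * (f i * g i) = (w i ^ (1 / p) * w i ^ (1 / q)) * (f i * g i) := by rw [hw1]
      _ = _ := by ring
  rw [Finset.sum_congr rfl fun i _ => hsplit i]
  convert Real.inner_le_Lp_mul_Lq_of_nonneg Finset.univ hpq
    (f := fun i => w i ^ (1 / p) * f i) (g := fun i => w i ^ (1 / q) * g i)
    (fun i _ => mul_nonneg (Real.rpow_nonneg (hw i) _) (hf i))
    (fun i _ => mul_nonneg (Real.rpow_nonneg (hw i) _) (hg i)) using 3
  · exact Finset.sum_congr rfl fun i _ => (rpow_one_div_mul_rpow (hw i) (hf i) hpq.ne_zero).symm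
  · exact Finset.sum_congr rfl fun i _ =>
      (rpow_one_div_mul_rpow (hw i) (hg i) hpq.symm.ne_zero).symm

lemma weighted_Lp_add_le {p : ℝ} (hp : 1 ≤ p) (w f g : ι → ℝ)
    (hw : ∀ i, 0 ≤ w i) (hf : ∀ i, 0 ≤ f i) (hg : ∀ i, 0 ≤ g i) :
    (∑ i, w i * (f i + g i) ^ p) ^ (1 / p) ≤
      (∑ i, w i * f i ^ p) ^ (1 / p) + (∑ i, w i * g i ^ p) ^ (1 / p) := by
  have hp0 : p ≠ 0 := by positivity
  have := Real.Lp_add_le_of_nonneg Finset.univ hp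
    (fun i _ => mul_nonneg (Real.rpow_nonneg (hw i) (1 / p)) (hf i))
    (fun i _ => mul_nonneg (Real.rpow_nonneg (hw i) (1 / p)) (hg i))
  simpa only [← mul_add, rpow_one_div_mul_rpow (hw _) (hf _) hp0,
    rpow_one_div_mul_rpow (hw _) (hg _) hp0,
    rpow_one_div_mul_rpow (hw _) (add_nonneg (hf _) (hg _)) hp0] using this

lemma weighted_Lp_sum_le {α : Type*} {p : ℝ} (hp : 1 ≤ p) (w : ι → ℝ) (hw : ∀ i, 0 ≤ w i)
    (s : Finset α) (H : α → ι → ℝ) (hH : ∀ a i, 0 ≤ H a i) :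
    (∑ i, w i * (∑ a ∈ s, H a i) ^ p) ^ (1 / p) ≤ ∑ a ∈ s, (∑ i, w i * H a i ^ p) ^ (1 / p) := by
  induction s using Finset.cons_induction with
  | empty =>
    simp [Real.zero_rpow (by positivity : p ≠ 0), Real.zero_rpow (by positivity : p⁻¹ ≠ 0)]
  | cons a s ha ih =>
    simp only [Finset.sum_cons]
    exact (weighted_Lp_add_le hp w _ _ hw (hH a) fun i => Finset.sum_nonneg fun b _ => hH b i).trans
      (by gcongr)

lemma weighted_sum_le_of_pos_imp_le (μ f : ι → ℝ) (hμ : ∀ i, 0 ≤ μ i) {c : ℝ}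
    (hf : ∀ i, 0 < μ i → f i ≤ c) : ∑ i, μ i * f i ≤ (∑ i, μ i) * c := by
  rw [Finset.sum_mul]
  refine Finset.sum_le_sum fun i _ => ?_
  rcases (hμ i).eq_or_lt with h | h
  · simp [← h]
  · exact mul_le_mul_of_nonneg_left (hf i h) h.le

lemma sum_mul_rpow_div_rpow_div {p q m : ℝ} {w a : ι → ℝ} (hp : 0 < p) (hq : 0 < q) (hm : 0 ≤ m)
    (hw : ∀ i, 0 ≤ w i) (ha : ∀ i, 0 ≤ a i) :
    (∑ i, w i * (m * a i ^ p) ^ (q / p)) ^ (p / q) = m * (∑ i, w i * a i ^ q) ^ (p / q) := by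
  have e : ∀ i, w i * (m * a i ^ p) ^ (q / p) = m ^ (q / p) * (w i * a i ^ q) := fun i => by
    rw [Real.mul_rpow hm (by have := ha i; positivity), ← Real.rpow_mul (ha i),
      mul_div_cancel₀ _ hp.ne']
    ring
  rw [Finset.sum_congr rfl fun i _ => e i, ← Finset.mul_sum,
    Real.mul_rpow (by positivity) (Finset.sum_nonneg fun i _ =>
      mul_nonneg (hw i) (by have := ha i; positivity)),
    ← Real.rpow_mul hm, show q / p * (p / q) = 1 by field_simp, Real.rpow_one]

lemma rpow_mul_rpow_le_mul_add {p q c a b : ℝ} (hp : 0 < p) (hq : 0 < q) (hc : 0 < c)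
    (hpqc : c / p + c / q = 1) (ha : 0 ≤ a) (hb : 0 ≤ b) :
    (p ^ (1 / p) * q ^ (1 / q)) ^ c * (a ^ (1 / p) * b ^ (1 / q)) ^ c ≤ c * (a + b) := by
  have hpa : 0 ≤ p * a := mul_nonneg hp.le ha
  have hqb : 0 ≤ q * b := mul_nonneg hq.le hb
  calc (p ^ (1 / p) * q ^ (1 / q)) ^ c * (a ^ (1 / p) * b ^ (1 / q)) ^ c
      = (p * a) ^ (c / p) * (q * b) ^ (c / q) := by
        rw [← Real.mul_rpow (by positivity) (by positivity), mul_mul_mul_comm,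
          ← Real.mul_rpow hp.le ha, ← Real.mul_rpow hq.le hb,
          Real.mul_rpow (by positivity) (by positivity), ← Real.rpow_mul hpa,
          ← Real.rpow_mul hqb, one_div_mul_eq_div, one_div_mul_eq_div]
    _ ≤ c / p * (p * a) + c / q * (q * b) :=
        Real.geom_mean_le_arith_mean2_weighted (by positivity) (by positivity) hpa hqb hpqc
    _ = c * (a + b) := by field_simp

end WeightedInequalities

section Marginals

variable {ρ : U × V → ℝ}

lemma margFst_nonneg [Fintype V] (hρ : ∀ z, 0 ≤ ρ z) (u : U) : 0 ≤ margFst ρ u :=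
  Finset.sum_nonneg fun v _ => hρ (u, v)

lemma margSnd_nonneg [Fintype U] (hρ : ∀ z, 0 ≤ ρ z) (v : V) : 0 ≤ margSnd ρ v :=
  Finset.sum_nonneg fun u _ => hρ (u, v)

lemma isDist_margFst [Fintype U] [Fintype V] (hρ : IsDist ρ) : IsDist (margFst ρ) :=
  ⟨margFst_nonneg hρ.1, (Fintype.sum_prod_type ρ).symm.trans hρ.2⟩

lemma isDist_margSnd [Fintype U] [Fintype V] (hρ : IsDist ρ) : IsDist (margSnd ρ) :=
  ⟨margSnd_nonneg hρ.1, (Fintype.sum_prod_type_right ρ).symm.trans hρ.2⟩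

lemma exists_pos_of_margFst_pos [Fintype V] {u : U} (h : 0 < margFst ρ u) :
    ∃ v, 0 < ρ (u, v) := by
  obtain ⟨v, -, hv⟩ := Finset.exists_lt_of_sum_lt (s := Finset.univ) (f := fun _ => (0 : ℝ))
    (by simpa [margFst] using h)
  exact ⟨v, hv⟩

lemma exists_pos_of_margSnd_pos [Fintype U] {v : V} (h : 0 < margSnd ρ v) :
    ∃ u, 0 < ρ (u, v) := by
  obtain ⟨u, -, hu⟩ := Finset.exists_lt_of_sum_lt (s := Finset.univ) (f := fun _ => (0 : ℝ))
    (by simpa [margSnd] using h)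
  exact ⟨u, hu⟩

lemma margSnd_mul_div_margSnd [Fintype U] (hρ : ∀ z, 0 ≤ ρ z) (u : U) (v : V) :
    margSnd ρ v * (ρ (u, v) / margSnd ρ v) = ρ (u, v) := by
  by_cases hv : margSnd ρ v = 0
  · rw [hv, zero_mul, eq_comm]
    exact (Finset.sum_eq_zero_iff_of_nonneg fun u _ => hρ (u, v)).1 hv u (Finset.mem_univ u)
  · exact mul_div_cancel₀ _ hv

end Marginals

section Hypercontractivity

variable {q p : ℝ}

lemma Hyper.sum_rpow_le [Fintype U] [Fintype V] {ρ : U × V → ℝ} (h : Hyper ρ q p)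
    (hρ : ∀ z, 0 ≤ ρ z) {s : ℝ} (hs : 0 ≤ s) (f : U → ℂ) :
    (∑ v, margSnd ρ v * ‖condOp ρ f v‖ ^ q) ^ (s / q) ≤
      (∑ u, margFst ρ u * ‖f u‖ ^ p) ^ (s / p) := by
  have hSnd : 0 ≤ ∑ v, margSnd ρ v * ‖condOp ρ f v‖ ^ q :=
    Finset.sum_nonneg fun v _ => mul_nonneg (margSnd_nonneg hρ v) (by positivity)
  have hFst : 0 ≤ ∑ u, margFst ρ u * ‖f u‖ ^ p :=
    Finset.sum_nonneg fun u _ => mul_nonneg (margFst_nonneg hρ u) (by positivity)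
  have := Real.rpow_le_rpow (Real.rpow_nonneg hSnd _) (h f) hs
  simp only [lnorm] at this
  rwa [← Real.rpow_mul hSnd, ← Real.rpow_mul hFst, one_div_mul_eq_div,
    one_div_mul_eq_div] at this

lemma lnorm_comp_equiv {α β : Type*} [Fintype α] [Fintype β] (e : β ≃ α) (μ : α → ℝ) (r : ℝ)
    (h : α → ℂ) : lnorm (μ ∘ e) r (h ∘ e) = lnorm μ r h := by
  simp only [lnorm, ← e.sum_comp (fun a => μ a * ‖h a‖ ^ r), Function.comp_apply]

lemma Hyper.comp_equiv [Fintype U] [Fintype V] {U' V' : Type*} [Fintype U'] [Fintype V']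
    {ρ : U × V → ℝ} (h : Hyper ρ q p) (e₁ : U' ≃ U) (e₂ : V' ≃ V) :
    Hyper (fun z : U' × V' => ρ (e₁ z.1, e₂ z.2)) q p := by
  intro f
  have hSnd : margSnd (fun z : U' × V' => ρ (e₁ z.1, e₂ z.2)) = margSnd ρ ∘ e₂ :=
    funext fun v => e₁.sum_comp fun u => ρ (u, e₂ v)
  have hFst : margFst (fun z : U' × V' => ρ (e₁ z.1, e₂ z.2)) = margFst ρ ∘ e₁ :=
    funext fun u => e₂.sum_comp fun v => ρ (e₁ u, v)
  have hOp : condOp (fun z : U' × V' => ρ (e₁ z.1, e₂ z.2)) f = condOp ρ (f ∘ e₁.symm) ∘ e₂ := by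
    funext v
    simp only [condOp, hSnd, Function.comp_apply, ← e₁.sum_comp fun u =>
      ((ρ (u, e₂ v) / margSnd ρ (e₂ v) : ℝ) : ℂ) * f (e₁.symm u), Equiv.symm_apply_apply]
  calc lnorm (margSnd (fun z : U' × V' => ρ (e₁ z.1, e₂ z.2))) q
        (condOp (fun z : U' × V' => ρ (e₁ z.1, e₂ z.2)) f)
      = lnorm (margSnd ρ) q (condOp ρ (f ∘ e₁.symm)) := by rw [hSnd, hOp, lnorm_comp_equiv]
    _ ≤ lnorm (margFst ρ) p (f ∘ e₁.symm) := h _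
    _ = lnorm (margFst (fun z : U' × V' => ρ (e₁ z.1, e₂ z.2))) p f := by
      rw [hFst, ← lnorm_comp_equiv e₁, Function.comp_assoc, e₁.symm_comp_self,
        Function.comp_id]

lemma margSnd_tensor [Fintype U] [Fintype X] (ρ : U × V → ℝ) (σ : X × Y → ℝ) (v : V) (y : Y) :
    margSnd (tensor ρ σ) (v, y) = margSnd ρ v * margSnd σ y := by
  rw [margSnd, Fintype.sum_prod_type, margSnd, margSnd, Finset.sum_mul_sum]
  rfl

lemma margFst_tensor [Fintype V] [Fintype Y] (ρ : U × V → ℝ) (σ : X × Y → ℝ) (u : U) (x : X) :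
    margFst (tensor ρ σ) (u, x) = margFst ρ u * margFst σ x := by
  rw [margFst, Fintype.sum_prod_type, margFst, margFst, Finset.sum_mul_sum]
  rfl

lemma condOp_tensor [Fintype U] [Fintype V] [Fintype X] [Fintype Y] (ρ : U × V → ℝ)
    (σ : X × Y → ℝ) (f : U × X → ℂ) (v : V) (y : Y) :
    condOp (tensor ρ σ) f (v, y) = condOp ρ (fun u => condOp σ (fun x => f (u, x)) y) v := by
  simp only [condOp, Fintype.sum_prod_type, Finset.mul_sum, margSnd_tensor, ← mul_assoc,
    ← Complex.ofReal_mul, tensor, div_mul_div_comm]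

lemma sum_margSnd_tensor_condOp [Fintype U] [Fintype V] [Fintype X] [Fintype Y]
    (ρ : U × V → ℝ) (σ : X × Y → ℝ) (f : U × X → ℂ) :
    ∑ z, margSnd (tensor ρ σ) z * ‖condOp (tensor ρ σ) f z‖ ^ q =
      ∑ y, margSnd σ y *
        ∑ v, margSnd ρ v * ‖condOp ρ (fun u => condOp σ (fun x => f (u, x)) y) v‖ ^ q := by
  simp only [Fintype.sum_prod_type_right, Finset.mul_sum, margSnd_tensor, condOp_tensor,
    mul_assoc, mul_left_comm (margSnd ρ _)]

lemma sum_margFst_tensor [Fintype U] [Fintype V] [Fintype X] [Fintype Y] (ρ : U × V → ℝ)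
    (σ : X × Y → ℝ) (f : U × X → ℂ) :
    ∑ z, margFst (tensor ρ σ) z * ‖f z‖ ^ p =
      ∑ u, margFst ρ u * ∑ x, margFst σ x * ‖f (u, x)‖ ^ p := by
  simp only [Fintype.sum_prod_type, Finset.mul_sum, margFst_tensor, mul_assoc]

theorem hyper_tensor [Fintype U] [Fintype V] [Fintype X] [Fintype Y] {ρ : U × V → ℝ}
    {σ : X × Y → ℝ} (hp : 1 ≤ p) (hpq : p ≤ q) (hρ : ∀ z, 0 ≤ ρ z) (hσ : ∀ z, 0 ≤ σ z)
    (h₁ : Hyper ρ q p) (h₂ : Hyper σ q p) :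
    Hyper (tensor ρ σ) q p := by
  intro f
  have hp0 : 0 < p := by linarith
  have hq0 : 0 < q := by linarith
  set g : U → Y → ℂ := fun u y => condOp σ (fun x => f (u, x)) y
  set Z := ∑ y, margSnd σ y * (∑ u, margFst ρ u * ‖g u y‖ ^ p) ^ (q / p)
  have hZ0 : 0 ≤ Z := Finset.sum_nonneg fun y _ => mul_nonneg (margSnd_nonneg hσ y)
    (Real.rpow_nonneg (Finset.sum_nonneg fun u _ => mul_nonneg (margFst_nonneg hρ u)
      (by positivity)) _)
  have hLHS : ∑ z, margSnd (tensor ρ σ) z * ‖condOp (tensor ρ σ) f z‖ ^ q ≤ Z := by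
    rw [sum_margSnd_tensor_condOp]
    refine Finset.sum_le_sum fun y _ => mul_le_mul_of_nonneg_left ?_ (margSnd_nonneg hσ y)
    simpa [div_self hq0.ne'] using h₁.sum_rpow_le hρ hq0.le (fun u => g u y)
  -- Minkowski's inequality in `L^{q/p}` moves the `u`-average outside.
  have hZ : Z ^ (p / q) ≤ ∑ u, margFst ρ u * ∑ x, margFst σ x * ‖f (u, x)‖ ^ p := by
    calc Z ^ (p / q) = Z ^ (1 / (q / p)) := by rw [one_div_div]
      _ ≤ ∑ u, (∑ y, margSnd σ y * (margFst ρ u * ‖g u y‖ ^ p) ^ (q / p)) ^ (1 / (q / p)) :=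
        weighted_Lp_sum_le ((one_le_div hp0).2 hpq) _ (margSnd_nonneg hσ) _ _
          fun u y => mul_nonneg (margFst_nonneg hρ u) (by positivity)
      _ = ∑ u, margFst ρ u * (∑ y, margSnd σ y * ‖g u y‖ ^ q) ^ (p / q) := by
        simp only [one_div_div]
        exact Finset.sum_congr rfl fun u _ => sum_mul_rpow_div_rpow_div hp0 hq0
          (margFst_nonneg hρ u) (margSnd_nonneg hσ) fun y => norm_nonneg _
      _ ≤ ∑ u, margFst ρ u * ∑ x, margFst σ x * ‖f (u, x)‖ ^ p := by
        gcongr with u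
        · exact margFst_nonneg hρ u
        · simpa [div_self hp0.ne'] using h₂.sum_rpow_le hσ hp0.le (fun x => f (u, x))
  calc lnorm (margSnd (tensor ρ σ)) q (condOp (tensor ρ σ) f) ≤ Z ^ (1 / q) :=
        Real.rpow_le_rpow (Finset.sum_nonneg fun z _ => mul_nonneg
          (margSnd_nonneg (fun _ => mul_nonneg (hρ _) (hσ _)) z) (by positivity)) hLHS
          (by positivity)
    _ = (Z ^ (p / q)) ^ (1 / p) := by
        rw [← Real.rpow_mul hZ0]
        field_simp
    _ ≤ lnorm (margFst (tensor ρ σ)) p f := by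
        rw [lnorm, sum_margFst_tensor]
        gcongr

lemma iid_nonneg {ρ : U × V → ℝ} (hρ : ∀ z, 0 ≤ ρ z) (ℓ : ℕ) (z : (Fin ℓ → U) × (Fin ℓ → V)) :
    0 ≤ iid ρ ℓ z :=
  Finset.prod_nonneg fun _ _ => hρ _

lemma sum_iid [Fintype U] [Fintype V] (ρ : U × V → ℝ) (ℓ : ℕ) :
    ∑ z, iid ρ ℓ z = (∑ z, ρ z) ^ ℓ := by
  calc ∑ z, iid ρ ℓ z = ∑ w : Fin ℓ → U × V, ∏ i, ρ (w i) :=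
        (Fintype.sum_equiv (Equiv.arrowProdEquivProdArrow _ _ _) _ _ fun w => rfl).symm
    _ = (∑ z, ρ z) ^ ℓ := by
        rw [← Fintype.prod_sum, Finset.prod_const, Finset.card_univ, Fintype.card_fin]

lemma isDist_iid [Fintype U] [Fintype V] {ρ : U × V → ℝ} (hρ : IsDist ρ) (ℓ : ℕ) :
    IsDist (iid ρ ℓ) :=
  ⟨iid_nonneg hρ.1 ℓ, by rw [sum_iid, hρ.2, one_pow]⟩

lemma iid_succ (ρ : U × V → ℝ) (ℓ : ℕ) :
    iid ρ (ℓ + 1) = fun z => tensor ρ (iid ρ ℓ)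
      ((Fin.consEquiv _).symm z.1, (Fin.consEquiv _).symm z.2) :=
  funext fun _ => Fin.prod_univ_succ _

lemma hyper_iid_zero [Fintype U] [Fintype V] {ρ : U × V → ℝ} (hq : q ≠ 0) (hp : p ≠ 0) :
    Hyper (iid ρ 0) q p := by
  intro f
  have hSnd : ∀ v, margSnd (iid ρ 0) v = 1 := fun v => by simp [margSnd, iid]
  have hFst : ∀ u, margFst (iid ρ 0) u = 1 := fun u => by simp [margFst, iid]
  have hOp : ∀ v, condOp (iid ρ 0) f v = f default := fun v => by
    simp [condOp, hSnd, iid]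
  simp only [lnorm, Fintype.sum_unique, hSnd, hFst, hOp, one_mul, one_div,
    Real.rpow_rpow_inv (norm_nonneg _) hq, Real.rpow_rpow_inv (norm_nonneg _) hp, le_refl]

theorem hyper_iid [Fintype U] [Fintype V] {ρ : U × V → ℝ} (hp : 1 ≤ p) (hpq : p ≤ q)
    (hρ : ∀ z, 0 ≤ ρ z) (h : Hyper ρ q p) : ∀ ℓ, Hyper (iid ρ ℓ) q p
  | 0 => hyper_iid_zero (by linarith) (by linarith)
  | ℓ + 1 => by
    rw [iid_succ]
    exact (hyper_tensor hp hpq hρ (iid_nonneg hρ ℓ) h (hyper_iid hp hpq hρ h ℓ)).comp_equiv _ _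

theorem Hyper.sum_mul_le [Fintype U] [Fintype V] {ρ : U × V → ℝ} {q' : ℝ} (h : Hyper ρ q p)
    (hρ : ∀ z, 0 ≤ ρ z) (hp : 1 ≤ p) (hqq' : q.HolderConjugate q') (F : U → ℝ) (G : V → ℝ)
    (hF : ∀ u, F u ∈ Set.Icc (0 : ℝ) 1) (hG : ∀ v, G v ∈ Set.Icc (0 : ℝ) 1) :
    ∑ z, ρ z * (F z.1 * G z.2) ≤
      (∑ u, margFst ρ u * F u) ^ (1 / p) * (∑ v, margSnd ρ v * G v) ^ (1 / q') := by
  set R : V → ℝ := fun v => ∑ u, ρ (u, v) / margSnd ρ v * F u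
  have hR : ∀ v, 0 ≤ R v := fun v => Finset.sum_nonneg fun u _ =>
    mul_nonneg (div_nonneg (hρ _) (margSnd_nonneg hρ v)) (hF u).1
  have hpair : ∑ z, ρ z * (F z.1 * G z.2) = ∑ v, margSnd ρ v * (R v * G v) := by
    simp only [R, Fintype.sum_prod_type_right, Finset.sum_mul, Finset.mul_sum, ← mul_assoc,
      margSnd_mul_div_margSnd hρ]
  have hTF : (∑ v, margSnd ρ v * R v ^ q) ^ (1 / q) ≤ (∑ u, margFst ρ u * F u ^ p) ^ (1 / p) := by
    have hOp : ∀ v, ‖condOp ρ (fun u => (F u : ℂ)) v‖ = R v := fun v => by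
      simp only [condOp, R, ← Complex.ofReal_mul, ← Complex.ofReal_sum, Complex.norm_real,
        Real.norm_of_nonneg (hR v)]
    have hF' : ∀ u, ‖(F u : ℂ)‖ = F u := fun u => by
      rw [Complex.norm_real, Real.norm_of_nonneg (hF u).1]
    simpa only [lnorm, hOp, hF'] using h (fun u => (F u : ℂ))
  have hFp : (∑ u, margFst ρ u * F u ^ p) ^ (1 / p) ≤ (∑ u, margFst ρ u * F u) ^ (1 / p) :=
    Real.rpow_le_rpow (Finset.sum_nonneg fun u _ =>
        mul_nonneg (margFst_nonneg hρ u) (Real.rpow_nonneg (hF u).1 _))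
      (Finset.sum_le_sum fun u _ => mul_le_mul_of_nonneg_left
        (Real.rpow_le_self_of_le_one (hF u).1 (hF u).2 hp) (margFst_nonneg hρ u))
      (by positivity)
  have hGq' : (∑ v, margSnd ρ v * G v ^ q') ^ (1 / q') ≤ (∑ v, margSnd ρ v * G v) ^ (1 / q') :=
    Real.rpow_le_rpow (Finset.sum_nonneg fun v _ =>
        mul_nonneg (margSnd_nonneg hρ v) (Real.rpow_nonneg (hG v).1 _))
      (Finset.sum_le_sum fun v _ => mul_le_mul_of_nonneg_left
        (Real.rpow_le_self_of_le_one (hG v).1 (hG v).2 hqq'.symm.lt.le) (margSnd_nonneg hρ v))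
      (one_div_nonneg.2 hqq'.symm.pos.le)
  rw [hpair]
  exact (weighted_inner_le_Lp_mul_Lq hqq' _ R G (margSnd_nonneg hρ) hR fun v => (hG v).1).trans
    (mul_le_mul (hTF.trans hFp) hGq' (Real.rpow_nonneg (Finset.sum_nonneg fun v _ =>
      mul_nonneg (margSnd_nonneg hρ v) (Real.rpow_nonneg (hG v).1 _)) _)
      (Real.rpow_nonneg (Finset.sum_nonneg fun u _ =>
        mul_nonneg (margFst_nonneg hρ u) (hF u).1) _))

end Hypercontractivity

section Protocols

variable {W R : Type*} [Fintype R] {n : ℕ}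

def memProb (μ : R → ℝ) (A : W → R → Finset (Fin n)) (i : Fin n) (w : W) : ℝ :=
  ∑ r, μ r * if i ∈ A w r then 1 else 0

lemma memProb_mem_Icc {μ : R → ℝ} (hμ : IsDist μ) (A : W → R → Finset (Fin n)) (i : Fin n)
    (w : W) : memProb μ A i w ∈ Set.Icc (0 : ℝ) 1 := by
  refine ⟨Finset.sum_nonneg fun r _ => mul_nonneg (hμ.1 r) (by positivity), ?_⟩
  calc memProb μ A i w ≤ (∑ r, μ r) * 1 :=
        weighted_sum_le_of_pos_imp_le μ _ hμ.1 fun r _ => by split_ifs <;> norm_num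
    _ = 1 := by rw [hμ.2, one_mul]

lemma sum_memProb (μ : R → ℝ) (A : W → R → Finset (Fin n)) (w : W) :
    ∑ i, memProb μ A i w = ∑ r, μ r * (A w r).card := by
  simp only [memProb]
  rw [Finset.sum_comm]
  simp only [← Finset.mul_sum, Finset.sum_boole, Finset.filter_mem_eq_inter, Finset.univ_inter]

lemma sum_expect_memProb_le [Fintype W] {ν : W → ℝ} {μ : R → ℝ} (hν : IsDist ν) (hμ : IsDist μ)
    {A : W → R → Finset (Fin n)} {m : ℕ} (hA : ∀ w r, 0 < ν w → 0 < μ r → (A w r).card ≤ m) :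
    ∑ i, ∑ w, ν w * memProb μ A i w ≤ m := by
  rw [Finset.sum_comm]
  simp only [← Finset.mul_sum, sum_memProb]
  calc ∑ w, ν w * ∑ r, μ r * ((A w r).card : ℝ) ≤ (∑ w, ν w) * m :=
        weighted_sum_le_of_pos_imp_le ν _ hν.1 fun w hw => by
          simpa [hμ.2] using weighted_sum_le_of_pos_imp_le μ _ hμ.1 fun r hr =>
            (Nat.cast_le.2 (hA w r hw hr) : ((A w r).card : ℝ) ≤ m)
    _ = m := by rw [hν.2, one_mul]

lemma sum_mul_mem_and_mem [Fintype U] [Fintype V] {sA sB : Type*} [Fintype sA] [Fintype sB]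
    (τ : U × V → ℝ) (μA : sA → ℝ) (μB : sB → ℝ) (A : U → sA → Finset (Fin n))
    (B : V → sB → Finset (Fin n)) (i : Fin n) :
    ∑ z, ∑ rA, ∑ rB, τ z * (μA rA * μB rB) * (if i ∈ A z.1 rA ∧ i ∈ B z.2 rB then 1 else 0) =
      ∑ z, τ z * (memProb μA A i z.1 * memProb μB B i z.2) := by
  refine Finset.sum_congr rfl fun z _ => ?_
  rw [memProb, memProb, Finset.sum_mul_sum, Finset.mul_sum]
  refine Finset.sum_congr rfl fun rA _ => ?_
  rw [Finset.mul_sum]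
  refine Finset.sum_congr rfl fun rB _ => ?_
  by_cases ha : i ∈ A z.1 rA <;> by_cases hb : i ∈ B z.2 rB <;> simp [ha, hb]

end Protocols

theorem ColLE.exists_rpow_le [Fintype U] [Fintype V] {q p q' P : ℝ} (hp : 1 ≤ p) (hpq : p ≤ q)
    (hqq' : q.HolderConjugate q') {ρ : U × V → ℝ} (hρ : IsDist ρ) (hhyp : Hyper ρ q p)
    {n m : ℕ} (hm : ColLE ρ n P m) :
    ∃ a b : Fin n → ℝ, (∀ i, 0 ≤ a i) ∧ (∀ i, 0 ≤ b i) ∧ ∑ i, a i ≤ m ∧ ∑ i, b i ≤ m ∧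
      ∀ i, P ≤ a i ^ (1 / p) * b i ^ (1 / q') := by
  obtain ⟨ℓ, sA, sB, μA, μB, A, B, hμA, hμB, hsucc, hA, hB⟩ := hm
  have hτ : IsDist (iid ρ ℓ) := isDist_iid hρ ℓ
  refine ⟨fun i => ∑ u, margFst (iid ρ ℓ) u * memProb μA A i u,
    fun i => ∑ v, margSnd (iid ρ ℓ) v * memProb μB B i v,
    fun i => Finset.sum_nonneg fun u _ =>
      mul_nonneg (margFst_nonneg hτ.1 u) (memProb_mem_Icc hμA A i u).1,
    fun i => Finset.sum_nonneg fun v _ =>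
      mul_nonneg (margSnd_nonneg hτ.1 v) (memProb_mem_Icc hμB B i v).1,
    sum_expect_memProb_le (isDist_margFst hτ) hμA fun u r hu hr =>
      let ⟨v, hv⟩ := exists_pos_of_margFst_pos hu; hA (u, v) r hv hr,
    sum_expect_memProb_le (isDist_margSnd hτ) hμB fun v r hv hr =>
      let ⟨u, hu⟩ := exists_pos_of_margSnd_pos hv; hB (u, v) r hu hr,
    fun i => ?_⟩
  exact ((hsucc i).trans_eq (sum_mul_mem_and_mem _ μA μB A B i)).trans
    ((hyper_iid hp hpq hρ.1 hhyp ℓ).sum_mul_le hτ.1 hp hqq' _ _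
      (memProb_mem_Icc hμA A i) (memProb_mem_Icc hμB B i))

lemma le_of_sum_le_of_inv_le_rpow_mul_rpow {p q c : ℝ} (hp : 0 < p) (hq : 0 < q)
    (hc : 1 / c = 1 / p + 1 / q) {n : ℕ} (hn : 1 ≤ n) {m : ℝ} {a b : Fin n → ℝ}
    (ha : ∀ i, 0 ≤ a i) (hb : ∀ i, 0 ≤ b i) (hsa : ∑ i, a i ≤ m) (hsb : ∑ i, b i ≤ m)
    (hab : ∀ i, 1 / (n : ℝ) ≤ a i ^ (1 / p) * b i ^ (1 / q)) :
    (p ^ (1 / p) * q ^ (1 / q)) ^ c / (2 * c) * (n : ℝ) ^ (1 - c) ≤ m := by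
  have hc0 : 0 < c := one_div_pos.1 (by rw [hc]; positivity)
  have hpqc : c / p + c / q = 1 := by
    rw [div_eq_mul_one_div c p, div_eq_mul_one_div c q, ← mul_add, ← hc, mul_one_div_cancel hc0.ne']
  have hn0 : (0 : ℝ) < n := by exact_mod_cast hn
  set K := (p ^ (1 / p) * q ^ (1 / q)) ^ c
  have hK : ∀ i, K * (1 / (n : ℝ)) ^ c ≤ c * (a i + b i) := fun i =>
    (mul_le_mul_of_nonneg_left (Real.rpow_le_rpow (by positivity) (hab i) hc0.le)
      (by positivity)).trans (rpow_mul_rpow_le_mul_add hp hq hc0 hpqc (ha i) (hb i))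
  have hsum : n * (K * (1 / (n : ℝ)) ^ c) ≤ c * (2 * m) := by
    calc n * (K * (1 / (n : ℝ)) ^ c) = ∑ _i : Fin n, K * (1 / (n : ℝ)) ^ c := by simp
      _ ≤ ∑ i, c * (a i + b i) := Finset.sum_le_sum fun i _ => hK i
      _ = c * (∑ i, a i + ∑ i, b i) := by rw [← Finset.mul_sum, Finset.sum_add_distrib]
      _ ≤ c * (2 * m) := by gcongr; linarith
  rw [div_mul_eq_mul_div, div_le_iff₀ (by positivity)]
  calc K * (n : ℝ) ^ (1 - c) = n * (K * (1 / (n : ℝ)) ^ c) := by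
        rw [Real.rpow_sub hn0, Real.rpow_one, one_div, Real.inv_rpow hn0.le]
        ring
    _ ≤ c * (2 * m) := hsum
    _ = m * (2 * c) := by ring

lemma ofReal_le_col [Fintype U] [Fintype V] {ρ : U × V → ℝ} {n : ℕ} {p B : ℝ}
    (h : ∀ m : ℕ, ColLE ρ n p m → B ≤ m) : ENNReal.ofReal B ≤ (col ρ n p : ℝ≥0∞) := by
  have hceil : ((⌈B⌉₊ : ℕ) : ℕ∞) ≤ col ρ n p :=
    le_sInf fun _ ⟨m, hk, hm⟩ => hk ▸ by exact_mod_cast Nat.ceil_le.2 (h m hm)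
  calc ENNReal.ofReal B ≤ ENNReal.ofReal ⌈B⌉₊ := ENNReal.ofReal_le_ofReal (Nat.le_ceil B)
    _ = ((⌈B⌉₊ : ℕ∞) : ℝ≥0∞) := by simp
    _ ≤ (col ρ n p : ℝ≥0∞) := ENat.toENNReal_le.2 hceil

theorem stmt16_general {U V : Type} [Fintype U] [Fintype V]
    (q p : ℝ) (hq : 1 < q) (hp : 1 ≤ p) (hpq : p ≤ q)
    (q' c : ℝ) (hq' : q' = q / (q - 1)) (hc : 1 / c = 1 / p + 1 / q')
    (ρ : U × V → ℝ) (hρ : IsDist ρ) (hhyp : Hyper ρ q p)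
    (n : ℕ) (hn : 1 ≤ n) :
    ENNReal.ofReal ((p ^ (1/p) * q' ^ (1/q')) ^ c / (2 * c) * (n : ℝ) ^ (1 - c))
      ≤ ((col ρ n (1/(n:ℝ)) : ℕ∞) : ℝ≥0∞) := by
  have hqq' : q.HolderConjugate q' := (Real.holderConjugate_iff_eq_conjExponent hq).2 hq'
  refine ofReal_le_col fun m hm => ?_
  obtain ⟨a, b, ha, hb, hsa, hsb, hab⟩ := hm.exists_rpow_le hp hpq hqq' hρ hhyp
  exact le_of_sum_le_of_inv_le_rpow_mul_rpow (by linarith) hqq'.symm.pos hc hn ha hb hsa hsb hab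

theorem stmt16 {U V : Type} [Fintype U] [Fintype V] [Nonempty U] [Nonempty V]
    (q p : ℝ) (hq : 1 < q) (hp : 1 ≤ p) (hpq : p ≤ q)
    (q' c : ℝ) (hq' : q' = q / (q - 1)) (hc : 1 / c = 1 / p + 1 / q')
    (ρ : U × V → ℝ) (hρ : IsDist ρ) (hhyp : Hyper ρ q p)
    (n : ℕ) (hn : 1 ≤ n) :
    ENNReal.ofReal ((p ^ (1/p) * q' ^ (1/q')) ^ c / (2 * c) * (n : ℝ) ^ (1 - c))
      ≤ ((col ρ n (1/(n:ℝ)) : ℕ∞) : ℝ≥0∞) :=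
  stmt16_general q p hq hp hpq q' c hq' hc ρ hρ hhyp n hn

end SR
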